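/- Let C be a semidualizing (S,R)-bimodule and (M, N) a duality pair over R. Define M^C(S) as the class of S-modules isomorphic to C ⊗_R A with A ∈ A_C(R) ∩ M. Then an S-module X belongs to M^C(S) if and only if X lies in the Bass class B_C(S) and Hom_S(C, X) ∈ M. -/

import Mathlib

set_option linter.unusedVariables false
set_option linter.unusedSectionVars false

open MulOpposite CategoryTheory

open MulOpposite

noncomputable section

section BT
variable (R : Type) [Ring R] (M : Type) [AddCommGroup M] [Module Rᵐᵒᵖ M]
  (N : Type) [AddCommGroup N] [Module R N]

def btRel : Submodule ℤ (TensorProduct ℤ M N) :=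
  Submodule.span ℤ {x | ∃ (m : M) (r : R) (n : N),
    x = (op r • m) ⊗ₜ[ℤ] n - m ⊗ₜ[ℤ] (r • n)}

def BT : Type := TensorProduct ℤ M N ⧸ btRel R M N

instance : AddCommGroup (BT R M N) :=
  inferInstanceAs (AddCommGroup (TensorProduct ℤ M N ⧸ btRel R M N))

variable {M N}

def BT.mk (m : M) (n : N) : BT R M N :=
  Submodule.Quotient.mk (m ⊗ₜ[ℤ] n)

variable {R}

theorem BT.mk_rel (m : M) (r : R) (n : N) : BT.mk R (op r • m) n = BT.mk R m (r • n) := by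
  rw [BT.mk, BT.mk]
  exact (Submodule.Quotient.eq (btRel R M N)).mpr (Submodule.subset_span ⟨m, r, n, rfl⟩)

theorem BT.mk_add_left (m m' : M) (n : N) :
    BT.mk R (m + m') n = BT.mk R m n + BT.mk R m' n := by
  rw [BT.mk, BT.mk, BT.mk, TensorProduct.add_tmul]; rfl

theorem BT.mk_add_right (m : M) (n n' : N) :
    BT.mk R m (n + n') = BT.mk R m n + BT.mk R m n' := by
  rw [BT.mk, BT.mk, BT.mk, TensorProduct.tmul_add]; rfl

theorem BT.mk_zero_left (n : N) : BT.mk R (0 : M) n = 0 := by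
  rw [BT.mk, TensorProduct.zero_tmul]; rfl

theorem BT.mk_zero_right (m : M) : BT.mk R m (0 : N) = 0 := by
  rw [BT.mk, TensorProduct.tmul_zero]; rfl

theorem BT.ind {P : BT R M N → Prop} (h0 : P 0) (hmk : ∀ m n, P (BT.mk R m n))
    (hadd : ∀ x y, P x → P y → P (x + y)) : ∀ x, P x := by
  intro x
  obtain ⟨y, rfl⟩ := Submodule.Quotient.mk_surjective (btRel R M N) x
  induction y using TensorProduct.induction_on with
  | zero => exact h0
  | tmul m n => exact hmk m n
  | add a b ha hb => rw [Submodule.Quotient.mk_add]; exact hadd _ _ ha hb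

theorem BT.hom_ext {X : Type} [AddCommGroup X] {f g : BT R M N →ₗ[ℤ] X}
    (h : ∀ m n, f (BT.mk R m n) = g (BT.mk R m n)) : f = g :=
  LinearMap.ext fun x => BT.ind (P := fun y => f y = g y) (by simp) h
    (fun a b ha hb => by
      show f (a + b) = g (a + b)
      rw [map_add, map_add]
      exact congrArg₂ (· + ·) ha hb) x

/-- Functoriality of the balanced tensor product in the right variable. -/
def BT.map (R : Type) [Ring R] {M : Type} [AddCommGroup M] [Module Rᵐᵒᵖ M]
    {N N' : Type} [AddCommGroup N] [Module R N] [AddCommGroup N'] [Module R N']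
    (f : N →ₗ[R] N') : BT R M N →ₗ[ℤ] BT R M N' := by
  refine Submodule.mapQ _ _
    (TensorProduct.map LinearMap.id f.toAddMonoidHom.toIntLinearMap) ?_
  rw [btRel, Submodule.span_le]
  rintro x ⟨m, r, n, rfl⟩
  simp only [SetLike.mem_coe, Submodule.mem_comap, map_sub, TensorProduct.map_tmul,
    LinearMap.id_apply, AddMonoidHom.coe_toIntLinearMap, LinearMap.toAddMonoidHom_coe,
    map_smul]
  exact Submodule.subset_span ⟨m, r, f n, by rw [← map_smul]; exact map_sub _ _ _⟩

@[simp] theorem BT.map_mk (R : Type) [Ring R] {M : Type} [AddCommGroup M] [Module Rᵐᵒᵖ M]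
    {N N' : Type} [AddCommGroup N] [Module R N] [AddCommGroup N'] [Module R N']
    (f : N →ₗ[R] N') (m : M) (n : N) : BT.map R f (BT.mk R m n) = BT.mk R m (f n) := rfl

section lsmul
variable (T : Type) [Ring T] [Module T M] [SMulCommClass T Rᵐᵒᵖ M]

/-- action of an auxiliary ring `T` on `M ⊗_R N` through the left factor. -/
def BT.lsmul (t : T) : BT R M N →ₗ[ℤ] BT R M N := by
  refine Submodule.mapQ _ _
    (TensorProduct.map (DistribMulAction.toAddMonoidHom M t).toIntLinearMap LinearMap.id) ?_
  rw [btRel, Submodule.span_le]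
  rintro x ⟨m, r, n, rfl⟩
  simp only [SetLike.mem_coe, Submodule.mem_comap, map_sub, TensorProduct.map_tmul,
    LinearMap.id_apply, AddMonoidHom.coe_toIntLinearMap, DistribMulAction.toAddMonoidHom_apply]
  exact Submodule.subset_span ⟨t • m, r, n, by rw [← smul_comm t (op r) m]; exact map_sub _ _ _⟩

@[simp] theorem BT.lsmul_mk (t : T) (m : M) (n : N) :
    BT.lsmul T t (BT.mk R m n) = BT.mk R (t • m) n := rfl

theorem BT.lsmul_one : BT.lsmul (R := R) (M := M) (N := N) T 1 = LinearMap.id :=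
  BT.hom_ext fun m n => by simp

theorem BT.lsmul_mul (t t' : T) :
    BT.lsmul (R := R) (M := M) (N := N) T (t * t') = (BT.lsmul T t).comp (BT.lsmul T t') :=
  BT.hom_ext fun m n => by simp [mul_smul]

theorem BT.lsmul_add (t t' : T) :
    BT.lsmul (R := R) (M := M) (N := N) T (t + t') = BT.lsmul T t + BT.lsmul T t' :=
  BT.hom_ext fun m n => by simp [add_smul, BT.mk_add_left]

theorem BT.lsmul_zero : BT.lsmul (R := R) (M := M) (N := N) T 0 = 0 :=
  BT.hom_ext fun m n => by simp [BT.mk_zero_left]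

/-- The left auxiliary module structure on the balanced tensor product. -/
instance (priority := 100) BT.instLModule : Module T (BT R M N) where
  smul t x := BT.lsmul T t x
  one_smul x := by show BT.lsmul T 1 x = x; rw [BT.lsmul_one]; rfl
  mul_smul t t' x := by
    show BT.lsmul T (t * t') x = BT.lsmul T t (BT.lsmul T t' x)
    rw [BT.lsmul_mul]; rfl
  smul_zero t := map_zero (BT.lsmul T t)
  smul_add t x y := map_add (BT.lsmul T t) x y
  add_smul t t' x := by
    show BT.lsmul T (t + t') x = BT.lsmul T t x + BT.lsmul T t' x
    rw [BT.lsmul_add]; rfl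
  zero_smul x := by show BT.lsmul T 0 x = 0; rw [BT.lsmul_zero]; rfl

theorem BT.smul_mk (t : T) (m : M) (n : N) :
    t • (BT.mk R m n) = BT.mk R (t • m) n := BT.lsmul_mk T t m n

end lsmul

section rsmul
variable (T : Type) [Ring T] [Module T N] [SMulCommClass T R N]

/-- action of an auxiliary ring `T` on `M ⊗_R N` through the right factor. -/
def BT.rsmul (t : T) : BT R M N →ₗ[ℤ] BT R M N := by
  refine Submodule.mapQ _ _
    (TensorProduct.map LinearMap.id (DistribMulAction.toAddMonoidHom N t).toIntLinearMap) ?_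
  rw [btRel, Submodule.span_le]
  rintro x ⟨m, r, n, rfl⟩
  simp only [SetLike.mem_coe, Submodule.mem_comap, map_sub, TensorProduct.map_tmul,
    LinearMap.id_apply, AddMonoidHom.coe_toIntLinearMap, DistribMulAction.toAddMonoidHom_apply]
  exact Submodule.subset_span ⟨m, r, t • n, by rw [← smul_comm t r n]; exact map_sub _ _ _⟩

@[simp] theorem BT.rsmul_mk (t : T) (m : M) (n : N) :
    BT.rsmul T t (BT.mk R m n) = BT.mk R m (t • n) := rfl

theorem BT.rsmul_one : BT.rsmul (R := R) (M := M) (N := N) T 1 = LinearMap.id :=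
  BT.hom_ext fun m n => by simp

theorem BT.rsmul_mul (t t' : T) :
    BT.rsmul (R := R) (M := M) (N := N) T (t * t') = (BT.rsmul T t).comp (BT.rsmul T t') :=
  BT.hom_ext fun m n => by simp [mul_smul]

theorem BT.rsmul_add (t t' : T) :
    BT.rsmul (R := R) (M := M) (N := N) T (t + t') = BT.rsmul T t + BT.rsmul T t' :=
  BT.hom_ext fun m n => by simp [add_smul, BT.mk_add_right]

theorem BT.rsmul_zero : BT.rsmul (R := R) (M := M) (N := N) T 0 = 0 :=
  BT.hom_ext fun m n => by simp [BT.mk_zero_right]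

/-- The right auxiliary module structure on the balanced tensor product. -/
instance (priority := 90) BT.instRModule : Module T (BT R M N) where
  smul t x := BT.rsmul T t x
  one_smul x := by show BT.rsmul T 1 x = x; rw [BT.rsmul_one]; rfl
  mul_smul t t' x := by
    show BT.rsmul T (t * t') x = BT.rsmul T t (BT.rsmul T t' x)
    rw [BT.rsmul_mul]; rfl
  smul_zero t := map_zero (BT.rsmul T t)
  smul_add t x y := map_add (BT.rsmul T t) x y
  add_smul t t' x := by
    show BT.rsmul T (t + t') x = BT.rsmul T t x + BT.rsmul T t' x
    rw [BT.rsmul_add]; rfl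
  zero_smul x := by show BT.rsmul T 0 x = 0; rw [BT.rsmul_zero]; rfl

theorem BT.smul_mk_right (t : T) (m : M) (n : N) :
    t • (BT.mk R m n) = BT.mk R m (t • n) := BT.rsmul_mk T t m n

end rsmul
end BT
end


noncomputable section

set_option linter.unusedSectionVars false

/-! ### Hom-module structures -/

section HomMod
variable (R S : Type) [Ring R] [Ring S]
variable (C : Type) [AddCommGroup C] [Module S C] [Module Rᵐᵒᵖ C] [SMulCommClass S Rᵐᵒᵖ C]

/-- For an `(S,R)`-bimodule `C` and a left `S`-module `X`, the abelian group
`Hom_S(C,X)` is a left `R`-module via `(r • f) c = f (c • r)`. -/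
instance homLeftModule (X : Type) [AddCommGroup X] [Module S X] :
    Module R (C →ₗ[S] X) where
  smul r f :=
    { toFun := fun c => f (op r • c)
      map_add' := fun c c' => by
        show f (op r • (c + c')) = f (op r • c) + f (op r • c')
        rw [smul_add, map_add]
      map_smul' := fun s c => by
        show f (op r • s • c) = s • f (op r • c)
        rw [← smul_comm s (op r) c, map_smul] }
  one_smul f := LinearMap.ext fun c => by
    show f (op (1 : R) • c) = f c
    rw [op_one, one_smul]
  mul_smul r r' f := LinearMap.ext fun c => by
    show f (op (r * r') • c) = f (op r' • op r • c)
    rw [← mul_smul, ← op_mul]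
  smul_add r f g := rfl
  smul_zero r := rfl
  add_smul r r' f := LinearMap.ext fun c => by
    show f (op (r + r') • c) = f (op r • c) + f (op r' • c)
    rw [← map_add, MulOpposite.op_add, add_smul]
  zero_smul f := LinearMap.ext fun c => by
    show f (op (0 : R) • c) = 0
    rw [op_zero, zero_smul, map_zero]

theorem homLeftModule_smul_apply (X : Type) [AddCommGroup X] [Module S X]
    (r : R) (f : C →ₗ[S] X) (c : C) : (r • f) c = f (op r • c) := rfl

/-- For an `(S,R)`-bimodule `C` and a right `R`-module `Y`, the abelian group
`Hom_{Rᵒᵖ}(C,Y)` is a right `S`-module via `(f • s) c = f (s • c)`. -/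
instance homRightModule (Y : Type) [AddCommGroup Y] [Module Rᵐᵒᵖ Y] :
    Module Sᵐᵒᵖ (C →ₗ[Rᵐᵒᵖ] Y) where
  smul s f :=
    { toFun := fun c => f (s.unop • c)
      map_add' := fun c c' => by
        show f (s.unop • (c + c')) = f (s.unop • c) + f (s.unop • c')
        rw [smul_add, map_add]
      map_smul' := fun r c => by
        show f (s.unop • r • c) = r • f (s.unop • c)
        rw [smul_comm s.unop r c, map_smul] }
  one_smul f := LinearMap.ext fun c => by
    show f ((1 : Sᵐᵒᵖ).unop • c) = f c
    rw [unop_one, one_smul]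
  mul_smul s s' f := LinearMap.ext fun c => by
    show f ((s * s').unop • c) = f (s'.unop • s.unop • c)
    rw [unop_mul, mul_smul]
  smul_add s f g := rfl
  smul_zero s := rfl
  add_smul s s' f := LinearMap.ext fun c => by
    show f ((s + s').unop • c) = f (s.unop • c) + f (s'.unop • c)
    rw [← map_add, MulOpposite.unop_add, add_smul]
  zero_smul f := LinearMap.ext fun c => by
    show f ((0 : Sᵐᵒᵖ).unop • c) = 0
    rw [unop_zero, zero_smul, map_zero]

theorem homRightModule_smul_apply (Y : Type) [AddCommGroup Y] [Module Rᵐᵒᵖ Y]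
    (s : Sᵐᵒᵖ) (f : C →ₗ[Rᵐᵒᵖ] Y) (c : C) : (s • f) c = f (s.unop • c) := rfl

end HomMod

/-! ### Character modules of one-sided modules -/

section Char
variable (R : Type) [Ring R] (M : Type) [AddCommGroup M]

/-- The character module of a left module is a right module. -/
instance instCharRight [Module R M] : Module Rᵐᵒᵖ (CharacterModule M) where
  smul r f := f.comp (DistribMulAction.toAddMonoidHom M r.unop)
  one_smul f := DFunLike.ext _ _ fun a => by
    show f ((1 : Rᵐᵒᵖ).unop • a) = f a
    rw [unop_one, one_smul]
  mul_smul r r' f := DFunLike.ext _ _ fun a => by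
    show f ((r * r').unop • a) = f (r'.unop • r.unop • a)
    rw [unop_mul, mul_smul]
  smul_add r f g := rfl
  smul_zero r := rfl
  add_smul r r' f := DFunLike.ext _ _ fun a => by
    show f ((r + r').unop • a) = f (r.unop • a) + f (r'.unop • a)
    rw [← map_add, MulOpposite.unop_add, add_smul]
  zero_smul f := DFunLike.ext _ _ fun a => by
    show f ((0 : Rᵐᵒᵖ).unop • a) = 0
    rw [unop_zero, zero_smul, map_zero]

theorem instCharRight_smul_apply [Module R M] (r : Rᵐᵒᵖ) (f : CharacterModule M) (a : M) :
    (r • f) a = f (r.unop • a) := rfl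

/-- The character module of a right module is a left module. -/
instance instCharLeft [Module Rᵐᵒᵖ M] : Module R (CharacterModule M) where
  smul r f := f.comp (DistribMulAction.toAddMonoidHom M (op r))
  one_smul f := DFunLike.ext _ _ fun a => by
    show f (op (1 : R) • a) = f a
    rw [op_one, one_smul]
  mul_smul r r' f := DFunLike.ext _ _ fun a => by
    show f (op (r * r') • a) = f (op r' • op r • a)
    rw [← mul_smul, ← op_mul]
  smul_add r f g := rfl
  smul_zero r := rfl
  add_smul r r' f := DFunLike.ext _ _ fun a => by
    show f (op (r + r') • a) = f (op r • a) + f (op r' • a)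
    rw [← map_add, MulOpposite.op_add, add_smul]
  zero_smul f := DFunLike.ext _ _ fun a => by
    show f (op (0 : R) • a) = 0
    rw [op_zero, zero_smul, map_zero]

theorem instCharLeft_smul_apply [Module Rᵐᵒᵖ M] (r : R) (f : CharacterModule M) (a : M) :
    (r • f) a = f (op r • a) := rfl

end Char
end

noncomputable section
section TorExt

/-- Tensoring with a fixed right `R`-module `M`, as a functor on left `R`-modules. -/
def btF (R : Type) [Ring R] (M : Type) [AddCommGroup M] [Module Rᵐᵒᵖ M] :
    ModuleCat.{0} R ⥤ AddCommGrpCat.{0} where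
  obj N := AddCommGrpCat.of (BT R M N)
  map f := AddCommGrpCat.ofHom (BT.map R f.hom).toAddMonoidHom
  map_id N := by
    have h : BT.map (M := M) R (LinearMap.id : ↥N →ₗ[R] ↥N) = LinearMap.id :=
      BT.hom_ext fun m n => by simp
    ext x
    show BT.map (M := M) R (LinearMap.id : ↥N →ₗ[R] ↥N) x = x
    rw [h]; rfl
  map_comp {X Y Z} f g := by
    have h : BT.map (M := M) R (LinearMap.comp (g.hom : ↥Y →ₗ[R] ↥Z) (f.hom : ↥X →ₗ[R] ↥Y))
        = (BT.map R g.hom).comp (BT.map R f.hom) :=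
      BT.hom_ext fun m n => by simp
    ext x
    show BT.map (M := M) R (LinearMap.comp (g.hom : ↥Y →ₗ[R] ↥Z) (f.hom : ↥X →ₗ[R] ↥Y)) x
      = BT.map R g.hom (BT.map R f.hom x)
    rw [h]; rfl

instance btF_additive (R : Type) [Ring R] (M : Type) [AddCommGroup M] [Module Rᵐᵒᵖ M] :
    (btF R M).Additive where
  map_add := by
    intro N N' f g
    have h : BT.map (M := M) R ((f + g).hom : ↥N →ₗ[R] ↥N')
        = BT.map R (f.hom : ↥N →ₗ[R] ↥N') + BT.map R (g.hom : ↥N →ₗ[R] ↥N') :=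
      BT.hom_ext fun m n => by
        rw [show BT.map R ((f + g).hom : ↥N →ₗ[R] ↥N') (BT.mk R m n)
            = BT.mk R m (f.hom n + g.hom n) from rfl, BT.mk_add_right]
        rfl
    ext x
    show BT.map (M := M) R ((f + g).hom : ↥N →ₗ[R] ↥N') x
      = BT.map R (f.hom : ↥N →ₗ[R] ↥N') x + BT.map R (g.hom : ↥N →ₗ[R] ↥N') x
    rw [h]; rfl

/-- `Tor_i^R(M, N)` for a right `R`-module `M` and a left `R`-module `N`,
computed as the `i`-th left derived functor of `M ⊗_R -`. -/
def TorGrp (R : Type) [Ring R] (M : Type) [AddCommGroup M] [Module Rᵐᵒᵖ M]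
    (N : Type) [AddCommGroup N] [Module R N] (i : ℕ) : Type :=
  ((btF R M).leftDerived i).obj (ModuleCat.of R N)

instance (R : Type) [Ring R] (M : Type) [AddCommGroup M] [Module Rᵐᵒᵖ M]
    (N : Type) [AddCommGroup N] [Module R N] (i : ℕ) : AddCommGroup (TorGrp R M N i) :=
  inferInstanceAs (AddCommGroup ↑(((btF R M).leftDerived i).obj (ModuleCat.of R N)))

/-- `Ext^i_R(A, B)`, computed by deriving `Hom_R(-, B)` using projective resolutions. -/
def ExtGrp (R : Type) [Ring R] (A : Type) [AddCommGroup A] [Module R A]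
    (B : Type) [AddCommGroup B] [Module R B] (i : ℕ) : Type :=
  ((Ext ℤ (ModuleCat.{0} R) i).obj (Opposite.op (ModuleCat.of R A))).obj (ModuleCat.of R B)

instance (R : Type) [Ring R] (A : Type) [AddCommGroup A] [Module R A]
    (B : Type) [AddCommGroup B] [Module R B] (i : ℕ) : AddCommGroup (ExtGrp R A B i) :=
  inferInstanceAs (AddCommGroup
    ↑(((Ext ℤ (ModuleCat.{0} R) i).obj (Opposite.op (ModuleCat.of R A))).obj (ModuleCat.of R B)))

end TorExt

end

noncomputable section
section Semidualizing
variable (R S : Type) [Ring R] [Ring S]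
variable (C : Type) [AddCommGroup C] [Module S C] [Module Rᵐᵒᵖ C]
  [SMulCommClass S Rᵐᵒᵖ C] [SMulCommClass Rᵐᵒᵖ S C]

/-- The natural map `A → Hom_S(C, C ⊗_R A)`. -/
def muR (A : Type) [AddCommGroup A] [Module R A] : A → (C →ₗ[S] BT R C A) :=
  fun a =>
  { toFun := fun c => BT.mk R c a
    map_add' := fun c c' => BT.mk_add_left c c' a
    map_smul' := fun s c => (BT.smul_mk S s c a).symm }

/-- The auxiliary evaluation on the plain tensor product. -/
def nuSAux (X : Type) [AddCommGroup X] [Module S X] :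
    TensorProduct ℤ C (C →ₗ[S] X) →ₗ[ℤ] X :=
  TensorProduct.lift (LinearMap.mk₂ ℤ (fun c (f : C →ₗ[S] X) => f c)
    (fun c c' f => map_add f c c')
    (fun z c f => map_zsmul f z c)
    (fun c f g => rfl)
    (fun z c f => rfl))

/-- The natural evaluation map `C ⊗_R Hom_S(C, X) → X`. -/
def nuS (X : Type) [AddCommGroup X] [Module S X] : BT R C (C →ₗ[S] X) → X :=
  fun x => Submodule.liftQ (btRel R C (C →ₗ[S] X)) (nuSAux S C X) (by
    rw [btRel, Submodule.span_le]
    rintro y ⟨c, r, f, rfl⟩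
    simp only [SetLike.mem_coe, LinearMap.mem_ker, map_sub]
    have h1 : nuSAux S C X ((op r • c) ⊗ₜ[ℤ] f) = f (op r • c) := rfl
    have h2 : nuSAux S C X (c ⊗ₜ[ℤ] (r • f)) = f (op r • c) := rfl
    rw [h1, h2, sub_self]) x

/-- The natural map `Y → Hom_{Rᵒᵖ}(C, Y ⊗_S C)`. -/
def muOp (Y : Type) [AddCommGroup Y] [Module Sᵐᵒᵖ Y] : Y → (C →ₗ[Rᵐᵒᵖ] BT S Y C) :=
  fun y =>
  { toFun := fun c => BT.mk S y c
    map_add' := fun c c' => BT.mk_add_right y c c'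
    map_smul' := fun r c => (BT.smul_mk_right Rᵐᵒᵖ r y c).symm }

/-- The auxiliary evaluation on the plain tensor product, opposite side. -/
def nuOpAux (B : Type) [AddCommGroup B] [Module Rᵐᵒᵖ B] :
    TensorProduct ℤ (C →ₗ[Rᵐᵒᵖ] B) C →ₗ[ℤ] B :=
  TensorProduct.lift (LinearMap.mk₂ ℤ (fun (f : C →ₗ[Rᵐᵒᵖ] B) c => f c)
    (fun f g c => rfl)
    (fun z f c => rfl)
    (fun f c c' => map_add f c c')
    (fun z f c => map_zsmul f z c))

/-- The natural evaluation map `Hom_{Rᵒᵖ}(C, B) ⊗_S C → B`. -/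
def nuOp (B : Type) [AddCommGroup B] [Module Rᵐᵒᵖ B] : BT S (C →ₗ[Rᵐᵒᵖ] B) C → B :=
  fun x => Submodule.liftQ (btRel S (C →ₗ[Rᵐᵒᵖ] B) C) (nuOpAux R C B) (by
    rw [btRel, Submodule.span_le]
    rintro y ⟨f, s, c, rfl⟩
    simp only [SetLike.mem_coe, LinearMap.mem_ker, map_sub]
    have h1 : nuOpAux R C B ((op s • f) ⊗ₜ[ℤ] c) = f (s • c) := rfl
    have h2 : nuOpAux R C B (f ⊗ₜ[ℤ] (s • c)) = f (s • c) := rfl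
    rw [h1, h2, sub_self]) x

/-- The Auslander class `A_C(R)`. -/
def AuslanderR (A : Type) [AddCommGroup A] [Module R A] : Prop :=
  (∀ i : ℕ, 1 ≤ i → Subsingleton (TorGrp R C A i)) ∧
  (∀ i : ℕ, 1 ≤ i → Subsingleton (ExtGrp S C (BT R C A) i)) ∧
  Function.Bijective (muR R S C A)

/-- The Bass class `B_C(S)`. -/
def BassS (X : Type) [AddCommGroup X] [Module S X] : Prop :=
  (∀ i : ℕ, 1 ≤ i → Subsingleton (ExtGrp S C X i)) ∧
  (∀ i : ℕ, 1 ≤ i → Subsingleton (TorGrp R C (C →ₗ[S] X) i)) ∧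
  Function.Bijective (nuS R S C X)

/-- The Auslander class `A_C(Sᵒᵖ)`. -/
def AuslanderOp (Y : Type) [AddCommGroup Y] [Module Sᵐᵒᵖ Y] : Prop :=
  (∀ i : ℕ, 1 ≤ i → Subsingleton (TorGrp S Y C i)) ∧
  (∀ i : ℕ, 1 ≤ i → Subsingleton (ExtGrp Rᵐᵒᵖ C (BT S Y C) i)) ∧
  Function.Bijective (muOp R S C Y)

/-- The Bass class `B_C(Rᵒᵖ)`. -/
def BassOp (B : Type) [AddCommGroup B] [Module Rᵐᵒᵖ B] : Prop :=
  (∀ i : ℕ, 1 ≤ i → Subsingleton (ExtGrp Rᵐᵒᵖ C B i)) ∧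
  (∀ i : ℕ, 1 ≤ i → Subsingleton (TorGrp S (C →ₗ[Rᵐᵒᵖ] B) C i)) ∧
  Function.Bijective (nuOp R S C B)

/-- `M` is of type `FP∞`: it admits a projective resolution by finitely generated
free modules. -/
def IsFPInfty (A : Type) [Ring A] (M : Type) [AddCommGroup M] [Module A M] : Prop :=
  ∃ P : CategoryTheory.ProjectiveResolution (ModuleCat.of A M),
    ∀ n : ℕ, Module.Finite A (P.complex.X n) ∧ Module.Free A (P.complex.X n)

/-- The homothety map `S → Hom_{Rᵒᵖ}(C, C)`. -/
def homothetyS : S → (C →ₗ[Rᵐᵒᵖ] C) := fun s =>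
  { toFun := fun c => s • c
    map_add' := fun c c' => smul_add s c c'
    map_smul' := fun r c => by
      show s • (r • c) = r • (s • c)
      rw [smul_comm] }

/-- The homothety map `R → Hom_S(C, C)`. -/
def homothetyR : R → (C →ₗ[S] C) := fun r =>
  { toFun := fun c => op r • c
    map_add' := fun c c' => smul_add (op r) c c'
    map_smul' := fun s c => by
      show op r • (s • c) = s • (op r • c)
      rw [smul_comm] }

/-- `C` is a semidualizing `(S,R)`-bimodule. -/
structure IsSemidualizing : Prop where
  fp_left : IsFPInfty S C
  fp_right : IsFPInfty Rᵐᵒᵖ C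
  homothety_S : Function.Bijective (homothetyS R S C)
  homothety_R : Function.Bijective (homothetyR R S C)
  ext_S : ∀ i : ℕ, 1 ≤ i → Subsingleton (ExtGrp S C C i)
  ext_R : ∀ i : ℕ, 1 ≤ i → Subsingleton (ExtGrp Rᵐᵒᵖ C C i)

/-- `C` is faithfully semidualizing. -/
structure IsFaithfullySemidualizing extends IsSemidualizing R S C : Prop where
  faithful_S : ∀ (X : Type) [AddCommGroup X] [Module S X],
    (∀ f : C →ₗ[S] X, f = 0) → Subsingleton X
  faithful_R : ∀ (Y : Type) [AddCommGroup Y] [Module Rᵐᵒᵖ Y],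
    (∀ f : C →ₗ[Rᵐᵒᵖ] Y, f = 0) → Subsingleton Y

end Semidualizing

end

noncomputable section
section DualityPairs

/-- A class of (bundled) left `R`-modules. -/
abbrev ModClass (R : Type) [Ring R] := Set (ModuleCat.{0} R)

/-- `(M, N)` is a duality pair over `R`: a left `R`-module lies in `M` iff its
character module lies in `N`, and `N` is closed under direct summands and finite
direct sums. -/
structure IsDualityPair (R : Type) [Ring R] (M : ModClass R) (N : ModClass Rᵐᵒᵖ) : Prop where
  char_mem : ∀ X : ModuleCat.{0} R,
    X ∈ M ↔ ModuleCat.of Rᵐᵒᵖ (CharacterModule X) ∈ N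
  summand_closed : ∀ (X Y : ModuleCat.{0} Rᵐᵒᵖ) (i : Y →ₗ[Rᵐᵒᵖ] X) (p : X →ₗ[Rᵐᵒᵖ] Y),
    p.comp i = LinearMap.id → X ∈ N → Y ∈ N
  finsum_closed : ∀ X Y : ModuleCat.{0} Rᵐᵒᵖ,
    X ∈ N → Y ∈ N → ModuleCat.of Rᵐᵒᵖ (↥X × ↥Y) ∈ N

/-- `(N, M)` is a duality pair over `Rᵒᵖ`: a right `R`-module lies in `N` iff its
character module lies in `M`, and `M` is closed under direct summands and finite
direct sums.  A duality pair `(M, N)` with this additional property is *symmetric*. -/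
structure IsDualityPairOp (R : Type) [Ring R] (N : ModClass Rᵐᵒᵖ) (M : ModClass R) : Prop where
  char_mem : ∀ Y : ModuleCat.{0} Rᵐᵒᵖ,
    Y ∈ N ↔ ModuleCat.of R (CharacterModule Y) ∈ M
  summand_closed : ∀ (X Y : ModuleCat.{0} R) (i : Y →ₗ[R] X) (p : X →ₗ[R] Y),
    p.comp i = LinearMap.id → X ∈ M → Y ∈ M
  finsum_closed : ∀ X Y : ModuleCat.{0} R,
    X ∈ M → Y ∈ M → ModuleCat.of R (↥X × ↥Y) ∈ M

/-- A monomorphism of left `R`-modules is pure if it stays injective after applying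
`M ⊗_R -` for every right `R`-module `M`. -/
def IsPureMono (R : Type) [Ring R] {A B : Type} [AddCommGroup A] [Module R A]
    [AddCommGroup B] [Module R B] (f : A →ₗ[R] B) : Prop :=
  Function.Injective f ∧
  ∀ (M : Type) [AddCommGroup M] [Module Rᵐᵒᵖ M],
    Function.Injective (BT.map (M := M) R f)

end DualityPairs

section Induced
variable (R S : Type) [Ring R] [Ring S]
variable (C : Type) [AddCommGroup C] [Module S C] [Module Rᵐᵒᵖ C]
  [SMulCommClass S Rᵐᵒᵖ C] [SMulCommClass Rᵐᵒᵖ S C]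

/-- The induced class `M^C(S)` of left `S`-modules isomorphic to `C ⊗_R A`
with `A` in the Auslander class and in `M`. -/
def inducedMC (Mcl : ModClass R) : ModClass S :=
  {X : ModuleCat.{0} S | ∃ A : ModuleCat.{0} R,
    AuslanderR R S C A ∧ A ∈ Mcl ∧ Nonempty (↥X ≃ₗ[S] BT R C ↥A)}

/-- The induced class `N^C(Sᵒᵖ)` of right `S`-modules isomorphic to `Hom_{Rᵒᵖ}(C, B)`
with `B` in the Bass class and in `N`. -/
def inducedNC (Ncl : ModClass Rᵐᵒᵖ) : ModClass Sᵐᵒᵖ :=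
  {Y : ModuleCat.{0} Sᵐᵒᵖ | ∃ B : ModuleCat.{0} Rᵐᵒᵖ,
    BassOp R S C ↥B ∧ B ∈ Ncl ∧ Nonempty (↥Y ≃ₗ[Sᵐᵒᵖ] (C →ₗ[Rᵐᵒᵖ] ↥B))}

end Induced

section Resolutions
variable (R : Type) [Ring R]

/-- `ResLen R cl n X` : `X` admits a resolution of length `n` by modules in `cl`. -/
def ResLen (cl : ModClass R) : ℕ → ModuleCat.{0} R → Prop
  | 0, X => X ∈ cl
  | n+1, X => ∃ (Y : ModuleCat.{0} R) (f : ↥Y →ₗ[R] ↥X), Y ∈ cl ∧ Function.Surjective f ∧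
      ResLen cl n (ModuleCat.of R (LinearMap.ker f))

/-- `X` has resolution dimension at most `n` with respect to `cl`. -/
def ResDimLE (cl : ModClass R) (n : ℕ) (X : ModuleCat.{0} R) : Prop :=
  ∃ m ≤ n, ResLen R cl m X

/-- `CoresLen R cl n X` : `X` admits a coresolution of length `n` by modules in `cl`. -/
def CoresLen (cl : ModClass R) : ℕ → ModuleCat.{0} R → Prop
  | 0, X => X ∈ cl
  | n+1, X => ∃ (Y : ModuleCat.{0} R) (f : ↥X →ₗ[R] ↥Y), Y ∈ cl ∧ Function.Injective f ∧
      CoresLen cl n (ModuleCat.of R (↥Y ⧸ LinearMap.range f))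

/-- `X` has coresolution dimension at most `n` with respect to `cl`. -/
def CoresDimLE (cl : ModClass R) (n : ℕ) (X : ModuleCat.{0} R) : Prop :=
  ∃ m ≤ n, CoresLen R cl m X

end Resolutions

section Gorenstein
open CategoryTheory
variable (R : Type) [Ring R]

/-- Exactness of a cochain complex of modules at every spot. -/
def AcyclicComplex (K : CochainComplex (ModuleCat.{0} R) ℤ) : Prop :=
  ∀ n : ℤ, K.ExactAt n

/-- `X` is `(Z, Y)`-Gorenstein injective: `X` is a cycle of an exact complex with
components in `Y` which stays exact under `Hom(Z₀, -)` for every `Z₀ ∈ Z`. -/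
def GorInj (Z Y : ModClass R) (X : Type) [AddCommGroup X] [Module R X] : Prop :=
  ∃ K : CochainComplex (ModuleCat.{0} R) ℤ,
    AcyclicComplex R K ∧
    (∀ n : ℤ, K.X n ∈ Y) ∧
    (∀ Z₀ : ModuleCat.{0} R, Z₀ ∈ Z → ∀ n : ℤ,
      ((((CategoryTheory.preadditiveCoyoneda.obj
        (Opposite.op Z₀)).mapHomologicalComplex _).obj K).ExactAt n)) ∧
    Nonempty (X ≃ₗ[R] LinearMap.ker (K.d 0 1).hom)

end Gorenstein

section GorensteinFlat
open CategoryTheory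
variable (S : Type) [Ring S]

/-- `X` is Gorenstein `(Xc, Yc)`-flat : `X` is a cycle of an exact complex with
components in `Xc` which stays exact under `Y₀ ⊗_S -` for every `Y₀ ∈ Yc`. -/
def GorFlat (Xc : ModClass S) (Yc : ModClass Sᵐᵒᵖ) (X : Type) [AddCommGroup X]
    [Module S X] : Prop :=
  ∃ K : CochainComplex (ModuleCat.{0} S) ℤ,
    AcyclicComplex S K ∧
    (∀ n : ℤ, K.X n ∈ Xc) ∧
    (∀ Y₀ : ModuleCat.{0} Sᵐᵒᵖ, Y₀ ∈ Yc → ∀ n : ℤ,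
      ((((btF S ↥Y₀).mapHomologicalComplex _).obj K).ExactAt n)) ∧
    Nonempty (X ≃ₗ[S] LinearMap.ker (K.d 0 1).hom)

end GorensteinFlat

end

noncomputable section
/-- `cl` is closed under extensions. -/
def ExtClosed (R : Type) [Ring R] (cl : ModClass R) : Prop :=
  ∀ (A B D : Type) [AddCommGroup A] [Module R A] [AddCommGroup B] [Module R B]
    [AddCommGroup D] [Module R D] (f : A →ₗ[R] B) (g : B →ₗ[R] D),
    Function.Injective f → Function.Surjective g →
    LinearMap.range f = LinearMap.ker g →
    ModuleCat.of R A ∈ cl → ModuleCat.of R D ∈ cl → ModuleCat.of R B ∈ cl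
end

noncomputable section
/-- Functoriality of the balanced tensor product in the left variable. -/
def BT.mapLeft (R : Type) [Ring R] {M M' : Type} [AddCommGroup M] [Module Rᵐᵒᵖ M]
    [AddCommGroup M'] [Module Rᵐᵒᵖ M'] {N : Type} [AddCommGroup N] [Module R N]
    (g : M →ₗ[Rᵐᵒᵖ] M') : BT R M N →ₗ[ℤ] BT R M' N := by
  refine Submodule.mapQ _ _
    (TensorProduct.map g.toAddMonoidHom.toIntLinearMap LinearMap.id) ?_
  rw [btRel, Submodule.span_le]
  rintro x ⟨m, r, n, rfl⟩
  simp only [SetLike.mem_coe, Submodule.mem_comap, map_sub, TensorProduct.map_tmul,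
    LinearMap.id_apply, AddMonoidHom.coe_toIntLinearMap, LinearMap.toAddMonoidHom_coe,
    map_smul]
  exact Submodule.subset_span ⟨g m, r, n, by rw [← map_smul]; exact map_sub _ _ _⟩

/-- A left module `F` over a (possibly noncommutative) ring is flat if `- ⊗_R F`
preserves injectivity of maps of right `R`-modules. -/
def IsFlatModule (R : Type) [Ring R] (F : Type) [AddCommGroup F] [Module R F] : Prop :=
  ∀ (M M' : Type) [AddCommGroup M] [Module Rᵐᵒᵖ M] [AddCommGroup M'] [Module Rᵐᵒᵖ M']
    (g : M →ₗ[Rᵐᵒᵖ] M'), Function.Injective g →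
    Function.Injective (BT.mapLeft (N := F) R g)
end

/-!
Both directions rest on the two natural maps `μ : A → Hom_S(C, C ⊗_R A)` and
`ν : C ⊗_R Hom_S(C, X) → X`, which satisfy `ν ∘ (C ⊗ μ) = id` and `Hom(C, ν) ∘ μ = id`.
If `A` is in the Auslander class, `μ` is an isomorphism, hence so is `ν` on `C ⊗_R A`,
and the Tor/Ext conditions of the two classes correspond through `A ≅ Hom_S(C, C ⊗_R A)`;
symmetrically for `X` in the Bass class and `A = Hom_S(C, X)`. Membership in `M` is
carried along these isomorphisms because the first class of a duality pair is closed
under isomorphisms: `A ≅ A'` makes the character modules isomorphic, in particular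
direct summands of each other.
-/

section Invariance

variable {T : Type} [Ring T]

theorem subsingleton_extGrp_of_linearEquiv {A X X' : Type} [AddCommGroup A] [Module T A]
    [AddCommGroup X] [Module T X] [AddCommGroup X'] [Module T X']
    (e : X ≃ₗ[T] X') (i : ℕ) [Subsingleton (ExtGrp T A X i)] :
    Subsingleton (ExtGrp T A X' i) :=
  let iso := ((Ext ℤ (ModuleCat.{0} T) i).obj
    (Opposite.op (ModuleCat.of T A))).mapIso e.toModuleIso
  @Equiv.subsingleton _ _ ((forget (ModuleCat ℤ)).mapIso iso).toEquiv.symm ‹_›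

theorem subsingleton_torGrp_of_linearEquiv {M N N' : Type} [AddCommGroup M] [Module Tᵐᵒᵖ M]
    [AddCommGroup N] [Module T N] [AddCommGroup N'] [Module T N']
    (e : N ≃ₗ[T] N') (i : ℕ) [Subsingleton (TorGrp T M N i)] :
    Subsingleton (TorGrp T M N' i) :=
  let iso := ((btF T M).leftDerived i).mapIso e.toModuleIso
  @Equiv.subsingleton _ _ ((forget AddCommGrpCat).mapIso iso).toEquiv.symm ‹_›

theorem BT.map_bijective {M N N' : Type} [AddCommGroup M] [Module Tᵐᵒᵖ M]
    [AddCommGroup N] [Module T N] [AddCommGroup N'] [Module T N']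
    (e : N ≃ₗ[T] N') : Function.Bijective (BT.map (M := M) T (e : N →ₗ[T] N')) := by
  have left_inv : (BT.map (M := M) T (e.symm : N' →ₗ[T] N)).comp (BT.map T (e : N →ₗ[T] N'))
      = LinearMap.id := BT.hom_ext fun m n => by simp
  have right_inv : (BT.map (M := M) T (e : N →ₗ[T] N')).comp (BT.map T (e.symm : N' →ₗ[T] N))
      = LinearMap.id := BT.hom_ext fun m n => by simp
  exact Function.bijective_iff_has_inverse.mpr ⟨BT.map T (e.symm : N' →ₗ[T] N),
    LinearMap.congr_fun left_inv, LinearMap.congr_fun right_inv⟩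

def CharacterModule.precomp {A A' : Type} [AddCommGroup A] [Module T A]
    [AddCommGroup A'] [Module T A'] (f : A →ₗ[T] A') :
    CharacterModule A' →ₗ[Tᵐᵒᵖ] CharacterModule A where
  toFun χ := χ.comp f.toAddMonoidHom
  map_add' _ _ := rfl
  map_smul' t χ := AddMonoidHom.ext fun a => by
    show χ (t.unop • f a) = χ (f (t.unop • a))
    rw [f.map_smul]

theorem IsDualityPair.mem_of_linearEquiv {Mcl : ModClass T} {Ncl : ModClass Tᵐᵒᵖ}
    (hdp : IsDualityPair T Mcl Ncl) {A A' : ModuleCat.{0} T} (e : A ≃ₗ[T] A')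
    (hA : A ∈ Mcl) : A' ∈ Mcl := by
  rw [hdp.char_mem] at hA ⊢
  refine hdp.summand_closed _ _ (CharacterModule.precomp (e : A →ₗ[T] A'))
    (CharacterModule.precomp (e.symm : A' →ₗ[T] A)) ?_ hA
  ext χ a
  exact congrArg χ (e.apply_symm_apply a)

end Invariance

section Foxby

variable (R S : Type) [Ring R] [Ring S]
variable (C : Type) [AddCommGroup C] [Module S C] [Module Rᵐᵒᵖ C] [SMulCommClass S Rᵐᵒᵖ C]

def homCongrRight {X X' : Type} [AddCommGroup X] [Module S X] [AddCommGroup X'] [Module S X']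
    (e : X ≃ₗ[S] X') : (C →ₗ[S] X) ≃ₗ[R] (C →ₗ[S] X') where
  toFun f := e.toLinearMap.comp f
  map_add' f g := LinearMap.ext fun c => map_add e (f c) (g c)
  map_smul' _ _ := rfl
  invFun f := e.symm.toLinearMap.comp f
  left_inv f := LinearMap.ext fun c => e.symm_apply_apply (f c)
  right_inv f := LinearMap.ext fun c => e.apply_symm_apply (f c)

def muRLinearMap (A : Type) [AddCommGroup A] [Module R A] :
    A →ₗ[R] (C →ₗ[S] BT R C A) where
  toFun := muR R S C A
  map_add' a a' := LinearMap.ext fun c => BT.mk_add_right c a a'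
  map_smul' r a := LinearMap.ext fun c => (BT.mk_rel c r a).symm

theorem nuS_zero (X : Type) [AddCommGroup X] [Module S X] : nuS R S C X 0 = 0 := by
  unfold nuS; exact map_zero _

theorem nuS_add (X : Type) [AddCommGroup X] [Module S X] (x y : BT R C (C →ₗ[S] X)) :
    nuS R S C X (x + y) = nuS R S C X x + nuS R S C X y := by
  unfold nuS; exact map_add _ x y

def nuSLinearMap (X : Type) [AddCommGroup X] [Module S X] :
    BT R C (C →ₗ[S] X) →ₗ[S] X where
  toFun := nuS R S C X
  map_add' := nuS_add R S C X
  map_smul' s x := by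
    induction x using BT.ind with
    | h0 => rw [smul_zero, nuS_zero, smul_zero]
    | hmk c f => rw [BT.smul_mk]; exact map_smul f s c
    | hadd x y hx hy => rw [smul_add, nuS_add, nuS_add, hx, hy, smul_add]

theorem nuS_map_muR (A : Type) [AddCommGroup A] [Module R A] (x : BT R C A) :
    nuS R S C (BT R C A) (BT.map R (muRLinearMap R S C A) x) = x := by
  induction x using BT.ind with
  | h0 => rw [map_zero, nuS_zero]
  | hmk c a => rfl
  | hadd x y hx hy => rw [map_add, nuS_add, hx, hy]

theorem BassS.of_linearEquiv {X X' : Type} [AddCommGroup X] [Module S X] [AddCommGroup X']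
    [Module S X'] (e : X ≃ₗ[S] X') (hX : BassS R S C X) : BassS R S C X' := by
  obtain ⟨hExt, hTor, hν⟩ := hX
  refine ⟨fun i hi => have := hExt i hi; subsingleton_extGrp_of_linearEquiv e i,
    fun i hi => have := hTor i hi; subsingleton_torGrp_of_linearEquiv (homCongrRight R S C e) i,
    ?_⟩
  have naturality : nuS R S C X' ∘ BT.map R (homCongrRight R S C e : _ →ₗ[R] _)
      = e ∘ nuS R S C X := by
    funext x
    induction x using BT.ind with
    | h0 => simp only [Function.comp_apply, map_zero, nuS_zero]
    | hmk c f => rfl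
    | hadd x y hx hy =>
      simp only [Function.comp_apply, map_add, nuS_add] at hx hy ⊢
      rw [hx, hy]
  exact (Function.Bijective.of_comp_iff _ (BT.map_bijective _)).mp
    (naturality ▸ e.bijective.comp hν)

theorem AuslanderR.bassS_bt {A : Type} [AddCommGroup A] [Module R A]
    (hA : AuslanderR R S C A) : BassS R S C (BT R C A) := by
  obtain ⟨hTor, hExt, hμ⟩ := hA
  let μ := LinearEquiv.ofBijective (muRLinearMap R S C A) hμ
  refine ⟨hExt, fun i hi => have := hTor i hi; subsingleton_torGrp_of_linearEquiv μ i, ?_⟩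
  have comp_eq_id : nuS R S C (BT R C A) ∘ BT.map R (μ : A →ₗ[R] _) = id :=
    funext (nuS_map_muR R S C A)
  exact (Function.Bijective.of_comp_iff _ (BT.map_bijective μ)).mp
    (comp_eq_id ▸ Function.bijective_id)

theorem BassS.auslanderR_hom {X : Type} [AddCommGroup X] [Module S X]
    (hX : BassS R S C X) : AuslanderR R S C (C →ₗ[S] X) := by
  obtain ⟨hExt, hTor, hν⟩ := hX
  let ν := LinearEquiv.ofBijective (nuSLinearMap R S C X) hν
  refine ⟨hTor, fun i hi => have := hExt i hi; subsingleton_extGrp_of_linearEquiv ν.symm i, ?_⟩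
  have comp_eq_id : homCongrRight R S C ν ∘ muR R S C (C →ₗ[S] X) = id := rfl
  exact (Function.Bijective.of_comp_iff' (homCongrRight R S C ν).bijective _).mp
    (comp_eq_id ▸ Function.bijective_id)

end Foxby

theorem stmt11_general (R S : Type) [Ring R] [Ring S]
    (C : Type) [AddCommGroup C] [Module S C] [Module Rᵐᵒᵖ C]
    [SMulCommClass S Rᵐᵒᵖ C]
    (Mcl : ModClass R) (Ncl : ModClass Rᵐᵒᵖ) (hdp : IsDualityPair R Mcl Ncl)
    (X : ModuleCat.{0} S) :
    X ∈ inducedMC R S C Mcl ↔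
      (BassS R S C ↥X ∧ ModuleCat.of R (C →ₗ[S] ↥X) ∈ Mcl) := by
  constructor
  · rintro ⟨A, hA, hAM, ⟨e⟩⟩
    let μ := LinearEquiv.ofBijective (muRLinearMap R S C A) hA.2.2
    exact ⟨(hA.bassS_bt R S C).of_linearEquiv R S C e.symm,
      hdp.mem_of_linearEquiv ((homCongrRight R S C e).trans μ.symm).symm hAM⟩
  · rintro ⟨hX, hXM⟩
    let ν := LinearEquiv.ofBijective (nuSLinearMap R S C X) hX.2.2
    exact ⟨ModuleCat.of R (C →ₗ[S] X), hX.auslanderR_hom R S C, hXM, ⟨ν.symm⟩⟩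

/-- `X ∈ M^C(S)` iff `X` lies in the Bass class `B_C(S)` and
`Hom_S(C, X) ∈ M`. -/
theorem stmt11 (R S : Type) [Ring R] [Ring S]
    (C : Type) [AddCommGroup C] [Module S C] [Module Rᵐᵒᵖ C]
    [SMulCommClass S Rᵐᵒᵖ C] [SMulCommClass Rᵐᵒᵖ S C]
    (hC : IsSemidualizing R S C)
    (Mcl : ModClass R) (Ncl : ModClass Rᵐᵒᵖ) (hdp : IsDualityPair R Mcl Ncl)
    (X : ModuleCat.{0} S) :
    X ∈ inducedMC R S C Mcl ↔
      (BassS R S C ↥X ∧ ModuleCat.of R (C →ₗ[S] ↥X) ∈ Mcl) :=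
  stmt11_general R S C Mcl Ncl hdp X
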